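/- Let n, d ≥ 1, let B and σ₁, …, σ_d be real n×n matrices, and let b̂ : ℝⁿ → ℝⁿ and σ̂ : ℝⁿ → ℝ^{n×d} satisfy lim_{|x|→∞} (|b̂(x)| + ‖σ̂(x)‖)/|x| = 0. Define b(x) = B x + b̂(x) and let σ(x) be the n×d matrix whose j-th column is σ_j x plus the j-th column of σ̂(x). Set a = Σ_{j=1}^d σ_jᵀ σ_j, and for x ≠ 0 define G(x) = xᵀ b(x)/|x|² + trace(σ(x)ᵀ σ(x))/(2|x|²) − |σ(x)ᵀ x|²/|x|⁴. Then for every ε > 0 there exists R > 0 such that for all x with |x| ≥ R, G(x) ≤ Λ_B + Λ_a/2 − Σ_{j=1}^d ρ_{σ_j}² + ε. -/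

import Mathlib

/-!
Put `t = |x|²`. With a uniform bound `|σⱼ y| ≤ c |y|`, Cauchy–Schwarz shows that each of the
three terms of `G(x)` differs from the corresponding term for the linear coefficients `Bx`, `σⱼ x`
by at most a constant times `δ = (|b̂(x)| + Σⱼ |σ̂ⱼ(x)|) / |x|` once `δ ≤ 1`, and `δ → 0`.
The linear terms are Rayleigh quotients: `xᵀ B x / t ≤ Λ_B`, `|xᵀ σⱼ x| / t ≥ ρ_{σⱼ}`, and the
trace term is `xᵀ a x / 2t ≤ Λ_a / 2` because `xᵀ a x = Σⱼ |σⱼ x|²`.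
-/

open Matrix

/-- The largest eigenvalue `Λ_M` of `(M + Mᵀ)/2`, equivalently `sup_{|u|=1} uᵀ M u`. -/
noncomputable def lamMax {n : ℕ} (M : Matrix (Fin n) (Fin n) ℝ) : ℝ :=
  sSup {r : ℝ | ∃ u : Fin n → ℝ, Real.sqrt (u ⬝ᵥ u) = 1 ∧ r = u ⬝ᵥ M *ᵥ u}

/-- `ρ_M = inf_{|u|=1} |uᵀ M u|`. -/
noncomputable def rhoMin {n : ℕ} (M : Matrix (Fin n) (Fin n) ℝ) : ℝ :=
  sInf {r : ℝ | ∃ u : Fin n → ℝ, Real.sqrt (u ⬝ᵥ u) = 1 ∧ r = |u ⬝ᵥ M *ᵥ u|}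

section Vectors

variable {ι : Type*} [Fintype ι]

lemma dotProduct_self_nonneg (x : ι → ℝ) : 0 ≤ x ⬝ᵥ x :=
  dotProduct_star_self_nonneg x

lemma abs_dotProduct_le_sqrt_mul_sqrt (x y : ι → ℝ) :
    |x ⬝ᵥ y| ≤ √(x ⬝ᵥ x) * √(y ⬝ᵥ y) := by
  rw [← Real.sqrt_mul (dotProduct_self_nonneg x)]
  exact Real.abs_le_sqrt <| by
    simpa only [dotProduct, sq] using Finset.sum_mul_sq_le_sq_mul_sq Finset.univ x y

lemma abs_dotProduct_le_of_sqrt_le {x y : ι → ℝ} {c : ℝ} (h : √(y ⬝ᵥ y) ≤ c * √(x ⬝ᵥ x)) :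
    |x ⬝ᵥ y| ≤ c * (x ⬝ᵥ x) :=
  calc |x ⬝ᵥ y| ≤ √(x ⬝ᵥ x) * √(y ⬝ᵥ y) := abs_dotProduct_le_sqrt_mul_sqrt x y
    _ ≤ √(x ⬝ᵥ x) * (c * √(x ⬝ᵥ x)) := mul_le_mul_of_nonneg_left h (Real.sqrt_nonneg _)
    _ = c * (x ⬝ᵥ x) := by
      rw [mul_left_comm, Real.mul_self_sqrt (dotProduct_self_nonneg x)]

lemma add_dotProduct_add_self_le {y h : ι → ℝ} {c δ r : ℝ} (hδ₀ : 0 ≤ δ) (hδ₁ : δ ≤ 1)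
    (hy : √(y ⬝ᵥ y) ≤ c * r) (hh : √(h ⬝ᵥ h) ≤ δ * r) :
    (y + h) ⬝ᵥ (y + h) ≤ y ⬝ᵥ y + (2 * c + 1) * δ * r ^ 2 := by
  have hyh : |y ⬝ᵥ h| ≤ c * r * (δ * r) :=
    (abs_dotProduct_le_sqrt_mul_sqrt y h).trans
      (mul_le_mul hy hh (Real.sqrt_nonneg _) ((Real.sqrt_nonneg _).trans hy))
  have hhh : h ⬝ᵥ h ≤ δ * r ^ 2 :=
    calc h ⬝ᵥ h = √(h ⬝ᵥ h) ^ 2 := (Real.sq_sqrt (dotProduct_self_nonneg h)).symm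
      _ ≤ (δ * r) ^ 2 := pow_le_pow_left₀ (Real.sqrt_nonneg _) hh 2
      _ ≤ δ * r ^ 2 := by nlinarith [mul_nonneg (mul_nonneg hδ₀ (sub_nonneg.2 hδ₁)) (sq_nonneg r)]
  have hexp : (y + h) ⬝ᵥ (y + h) = y ⬝ᵥ y + 2 * (y ⬝ᵥ h) + h ⬝ᵥ h := by
    simp only [add_dotProduct, dotProduct_add, dotProduct_comm h y]
    ring
  rw [hexp]
  nlinarith [le_abs_self (y ⬝ᵥ h)]

lemma exists_unit_dotProduct_mulVec_eq {x : ι → ℝ} (hx : x ≠ 0) :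
    ∃ u : ι → ℝ, √(u ⬝ᵥ u) = 1 ∧
      ∀ M : Matrix ι ι ℝ, x ⬝ᵥ M *ᵥ x = (u ⬝ᵥ M *ᵥ u) * (x ⬝ᵥ x) := by
  have ht : 0 < x ⬝ᵥ x := dotProduct_star_self_pos_iff.2 hx
  have hs : √(x ⬝ᵥ x) ^ 2 = x ⬝ᵥ x := Real.sq_sqrt ht.le
  refine ⟨(√(x ⬝ᵥ x))⁻¹ • x, Real.sqrt_eq_one.2 ?_, fun M => ?_⟩
  · simp only [smul_dotProduct, dotProduct_smul, smul_eq_mul]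
    field_simp
    exact hs.symm
  · simp only [mulVec_smul, smul_dotProduct, dotProduct_smul, smul_eq_mul]
    field_simp
    rw [hs]

end Vectors

lemma exists_sqrt_mulVec_le {m ι : Type*} [Fintype m] [Fintype ι] (M : Matrix m ι ℝ) :
    ∃ c, 0 ≤ c ∧ ∀ x, √((M *ᵥ x) ⬝ᵥ (M *ᵥ x)) ≤ c * √(x ⬝ᵥ x) := by
  refine ⟨√(∑ i, ∑ k, M i k ^ 2), Real.sqrt_nonneg _, fun x => ?_⟩
  have hM : 0 ≤ ∑ i, ∑ k, M i k ^ 2 := by positivity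
  rw [← Real.sqrt_mul hM, Finset.sum_mul]
  refine Real.sqrt_le_sqrt (Finset.sum_le_sum fun i _ => ?_)
  simpa only [mulVec, dotProduct, sq] using Finset.sum_mul_sq_le_sq_mul_sq Finset.univ (M i) x

lemma exists_forall_sqrt_mulVec_le {m ι κ : Type*} [Fintype m] [Fintype ι] [Fintype κ]
    (M : κ → Matrix m ι ℝ) :
    ∃ c, 0 ≤ c ∧ ∀ j x, √((M j *ᵥ x) ⬝ᵥ (M j *ᵥ x)) ≤ c * √(x ⬝ᵥ x) := by
  choose c hc₀ hc using fun j => exists_sqrt_mulVec_le (M j)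
  refine ⟨∑ j, c j, Finset.sum_nonneg fun j _ => hc₀ j, fun j x => (hc j x).trans ?_⟩
  exact mul_le_mul_of_nonneg_right
    (Finset.single_le_sum (fun k _ => hc₀ k) (Finset.mem_univ j)) (Real.sqrt_nonneg _)

lemma dotProduct_sum_transpose_mul_mulVec {n ι κ : Type*} [Fintype n] [Fintype ι] [Fintype κ]
    (σ : κ → Matrix ι n ℝ) (x : n → ℝ) :
    x ⬝ᵥ (∑ j, (σ j)ᵀ * σ j) *ᵥ x = ∑ j, (σ j *ᵥ x) ⬝ᵥ (σ j *ᵥ x) := by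
  simp only [sum_mulVec, dotProduct_sum, ← mulVec_mulVec, dotProduct_mulVec, vecMul_transpose]

section RayleighQuotient

variable {n : ℕ}

lemma dotProduct_mulVec_le_lamMax_mul (M : Matrix (Fin n) (Fin n) ℝ) (x : Fin n → ℝ) :
    x ⬝ᵥ M *ᵥ x ≤ lamMax M * (x ⬝ᵥ x) := by
  rcases eq_or_ne x 0 with rfl | hx
  · simp
  obtain ⟨u, hu, hxu⟩ := exists_unit_dotProduct_mulVec_eq hx
  obtain ⟨c, -, hc⟩ := exists_sqrt_mulVec_le M
  have hbdd : BddAbove {r : ℝ | ∃ u : Fin n → ℝ, Real.sqrt (u ⬝ᵥ u) = 1 ∧ r = u ⬝ᵥ M *ᵥ u} := by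
    refine ⟨c, ?_⟩
    rintro r ⟨v, hv, rfl⟩
    simpa [Real.sqrt_eq_one.1 hv] using (le_abs_self _).trans (abs_dotProduct_le_of_sqrt_le (hc v))
  rw [hxu M]
  exact mul_le_mul_of_nonneg_right (le_csSup hbdd ⟨u, hu, rfl⟩) (dotProduct_self_nonneg x)

lemma rhoMin_nonneg (M : Matrix (Fin n) (Fin n) ℝ) : 0 ≤ rhoMin M :=
  Real.sInf_nonneg (by rintro r ⟨u, -, rfl⟩; exact abs_nonneg _)

lemma rhoMin_mul_le_abs_dotProduct_mulVec (M : Matrix (Fin n) (Fin n) ℝ) (x : Fin n → ℝ) :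
    rhoMin M * (x ⬝ᵥ x) ≤ |x ⬝ᵥ M *ᵥ x| := by
  rcases eq_or_ne x 0 with rfl | hx
  · simp
  obtain ⟨u, hu, hxu⟩ := exists_unit_dotProduct_mulVec_eq hx
  have hbdd : BddBelow {r : ℝ | ∃ u : Fin n → ℝ, Real.sqrt (u ⬝ᵥ u) = 1 ∧ r = |u ⬝ᵥ M *ᵥ u|} :=
    ⟨0, by rintro r ⟨v, -, rfl⟩; exact abs_nonneg _⟩
  rw [hxu M, abs_mul, abs_of_nonneg (dotProduct_self_nonneg x)]
  exact mul_le_mul_of_nonneg_right (csInf_le hbdd ⟨u, hu, rfl⟩) (dotProduct_self_nonneg x)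

end RayleighQuotient

section GeneratorTerms

variable {n d : ℕ} {x : Fin n → ℝ} {c δ : ℝ}

lemma drift_term_le (B : Matrix (Fin n) (Fin n) ℝ) {β : Fin n → ℝ} (hx : x ≠ 0)
    (hβ : √(β ⬝ᵥ β) ≤ δ * √(x ⬝ᵥ x)) :
    x ⬝ᵥ (B *ᵥ x + β) / (x ⬝ᵥ x) ≤ lamMax B + δ := by
  have ht : 0 < x ⬝ᵥ x := dotProduct_star_self_pos_iff.2 hx
  rw [div_le_iff₀ ht, dotProduct_add, add_mul]
  exact add_le_add (dotProduct_mulVec_le_lamMax_mul B x)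
    ((le_abs_self _).trans (abs_dotProduct_le_of_sqrt_le hβ))

lemma trace_term_le (σ : Fin d → Matrix (Fin n) (Fin n) ℝ) {η : Fin d → Fin n → ℝ}
    (hx : x ≠ 0) (hδ₀ : 0 ≤ δ) (hδ₁ : δ ≤ 1)
    (hσ : ∀ j y, √((σ j *ᵥ y) ⬝ᵥ (σ j *ᵥ y)) ≤ c * √(y ⬝ᵥ y))
    (hη : ∀ j, √(η j ⬝ᵥ η j) ≤ δ * √(x ⬝ᵥ x)) :
    (∑ j, (σ j *ᵥ x + η j) ⬝ᵥ (σ j *ᵥ x + η j)) / (2 * (x ⬝ᵥ x))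
      ≤ lamMax (∑ j, (σ j)ᵀ * σ j) / 2 + d * (2 * c + 1) * δ / 2 := by
  have ht : 0 < x ⬝ᵥ x := dotProduct_star_self_pos_iff.2 hx
  have hsq : √(x ⬝ᵥ x) ^ 2 = x ⬝ᵥ x := Real.sq_sqrt ht.le
  have hsum : ∑ j, (σ j *ᵥ x + η j) ⬝ᵥ (σ j *ᵥ x + η j)
      ≤ ∑ j, ((σ j *ᵥ x) ⬝ᵥ (σ j *ᵥ x) + (2 * c + 1) * δ * (x ⬝ᵥ x)) :=
    Finset.sum_le_sum fun j _ => hsq ▸ add_dotProduct_add_self_le hδ₀ hδ₁ (hσ j x) (hη j)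
  rw [Finset.sum_add_distrib, ← dotProduct_sum_transpose_mul_mulVec, Finset.sum_const,
    Finset.card_univ, Fintype.card_fin, nsmul_eq_mul] at hsum
  have ha := dotProduct_mulVec_le_lamMax_mul (∑ j, (σ j)ᵀ * σ j) x
  rw [div_le_iff₀ (by positivity)]
  linarith

lemma radial_term_ge (σ : Fin d → Matrix (Fin n) (Fin n) ℝ)
    {η : Fin d → Fin n → ℝ} (hx : x ≠ 0)
    (hσ : ∀ j y, √((σ j *ᵥ y) ⬝ᵥ (σ j *ᵥ y)) ≤ c * √(y ⬝ᵥ y))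
    (hη : ∀ j, √(η j ⬝ᵥ η j) ≤ δ * √(x ⬝ᵥ x)) :
    ∑ j, rhoMin (σ j) ^ 2 - d * (2 * c * δ)
      ≤ (∑ j, (x ⬝ᵥ (σ j *ᵥ x + η j)) ^ 2) / (x ⬝ᵥ x) ^ 2 := by
  have ht : 0 < x ⬝ᵥ x := dotProduct_star_self_pos_iff.2 hx
  have hj : ∀ j, (rhoMin (σ j) ^ 2 - 2 * c * δ) * (x ⬝ᵥ x) ^ 2
      ≤ (x ⬝ᵥ (σ j *ᵥ x + η j)) ^ 2 := by
    intro j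
    have hp := abs_dotProduct_le_of_sqrt_le (hσ j x)
    have hq := abs_dotProduct_le_of_sqrt_le (hη j)
    have hpq : |x ⬝ᵥ σ j *ᵥ x| * |x ⬝ᵥ η j| ≤ c * (x ⬝ᵥ x) * (δ * (x ⬝ᵥ x)) :=
      mul_le_mul hp hq (abs_nonneg _) ((abs_nonneg _).trans hp)
    have hρ : (rhoMin (σ j) * (x ⬝ᵥ x)) ^ 2 ≤ (x ⬝ᵥ σ j *ᵥ x) ^ 2 := by
      rw [← sq_abs (x ⬝ᵥ σ j *ᵥ x)]
      exact pow_le_pow_left₀ (mul_nonneg (rhoMin_nonneg _) ht.le)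
        (rhoMin_mul_le_abs_dotProduct_mulVec (σ j) x) 2
    rw [dotProduct_add]
    nlinarith [neg_abs_le (x ⬝ᵥ σ j *ᵥ x * x ⬝ᵥ η j), abs_mul (x ⬝ᵥ σ j *ᵥ x) (x ⬝ᵥ η j),
      sq_nonneg (x ⬝ᵥ η j)]
  rw [le_div_iff₀ (by positivity)]
  calc (∑ j, rhoMin (σ j) ^ 2 - d * (2 * c * δ)) * (x ⬝ᵥ x) ^ 2
      = ∑ j, (rhoMin (σ j) ^ 2 - 2 * c * δ) * (x ⬝ᵥ x) ^ 2 := by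
        simp only [← Finset.sum_mul, Finset.sum_sub_distrib, Finset.sum_const, Finset.card_univ,
          Fintype.card_fin, nsmul_eq_mul]
        ring
    _ ≤ _ := Finset.sum_le_sum fun j _ => hj j

end GeneratorTerms

theorem generator_log_norm_linearizable_bound_general
    (n d : ℕ)
    (B : Matrix (Fin n) (Fin n) ℝ) (σ : Fin d → Matrix (Fin n) (Fin n) ℝ)
    (bhat : (Fin n → ℝ) → (Fin n → ℝ)) (σhat : Fin d → (Fin n → ℝ) → (Fin n → ℝ))
    (hlim : ∀ ε > (0 : ℝ), ∃ R > (0 : ℝ), ∀ x : Fin n → ℝ, R ≤ Real.sqrt (x ⬝ᵥ x) →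
      Real.sqrt (bhat x ⬝ᵥ bhat x) + ∑ j, Real.sqrt (σhat j x ⬝ᵥ σhat j x)
        ≤ ε * Real.sqrt (x ⬝ᵥ x)) :
    ∀ ε > (0 : ℝ), ∃ R > (0 : ℝ), ∀ x : Fin n → ℝ, R ≤ Real.sqrt (x ⬝ᵥ x) →
      (x ⬝ᵥ (B *ᵥ x + bhat x)) / (x ⬝ᵥ x)
        + (∑ j, (σ j *ᵥ x + σhat j x) ⬝ᵥ (σ j *ᵥ x + σhat j x)) / (2 * (x ⬝ᵥ x))
        - (∑ j, (x ⬝ᵥ (σ j *ᵥ x + σhat j x)) ^ 2) / (x ⬝ᵥ x) ^ 2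
      ≤ lamMax B + lamMax (∑ j, (σ j)ᵀ * σ j) / 2 - (∑ j, (rhoMin (σ j)) ^ 2) + ε := by
  intro ε hε
  obtain ⟨c, hc₀, hc⟩ := exists_forall_sqrt_mulVec_le σ
  have hK : 0 < 1 + d * (2 * c + 1) / 2 + d * (2 * c) := by positivity
  obtain ⟨δ, hδ₀, hδ₁, hδε⟩ :
      ∃ δ, 0 < δ ∧ δ ≤ 1 ∧ δ * (1 + d * (2 * c + 1) / 2 + d * (2 * c)) ≤ ε :=
    ⟨min 1 (ε / _), lt_min one_pos (div_pos hε hK), min_le_left _ _,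
      (le_div_iff₀ hK).1 (min_le_right _ _)⟩
  obtain ⟨R, hR₀, hR⟩ := hlim δ hδ₀
  refine ⟨R, hR₀, fun x hx => ?_⟩
  have hx₀ : x ≠ 0 := by
    rintro rfl
    simp only [dotProduct_zero, Real.sqrt_zero] at hx
    linarith
  have hsmall := hR x hx
  have hb : √(bhat x ⬝ᵥ bhat x) ≤ δ * √(x ⬝ᵥ x) := by
    linarith [Finset.sum_nonneg fun j (_ : j ∈ Finset.univ) =>
      Real.sqrt_nonneg (σhat j x ⬝ᵥ σhat j x)]
  have hη : ∀ j, √(σhat j x ⬝ᵥ σhat j x) ≤ δ * √(x ⬝ᵥ x) := fun j => by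
    linarith [Real.sqrt_nonneg (bhat x ⬝ᵥ bhat x), Finset.single_le_sum
      (fun k _ => Real.sqrt_nonneg (σhat k x ⬝ᵥ σhat k x)) (Finset.mem_univ j)]
  have h₁ := drift_term_le B hx₀ hb
  have h₂ := trace_term_le σ hx₀ hδ₀.le hδ₁ hc hη
  have h₃ := radial_term_ge σ hx₀ hc hη
  linarith

/-- If the drift `b(x) = Bx + b̂(x)` and the columns of the diffusion matrix
`σ(x)` are `σ_j x + σ̂_j(x)` with `(|b̂(x)| + ‖σ̂(x)‖)/|x| → 0` as `|x| → ∞`, then the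
generator applied to `ln|x|`, namely
`G(x) = xᵀ b(x)/|x|² + trace(σ(x)ᵀ σ(x))/(2|x|²) - |σ(x)ᵀ x|²/|x|⁴`,
satisfies `G(x) ≤ Λ_B + Λ_a/2 - Σ_j ρ_{σ_j}² + ε` for all `|x|` large enough, where
`a = Σ_j σ_jᵀ σ_j`. -/
theorem generator_log_norm_linearizable_bound
    (n d : ℕ) (hn : 1 ≤ n) (hd : 1 ≤ d)
    (B : Matrix (Fin n) (Fin n) ℝ) (σ : Fin d → Matrix (Fin n) (Fin n) ℝ)
    (bhat : (Fin n → ℝ) → (Fin n → ℝ)) (σhat : Fin d → (Fin n → ℝ) → (Fin n → ℝ))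
    (hlim : ∀ ε > (0 : ℝ), ∃ R > (0 : ℝ), ∀ x : Fin n → ℝ, R ≤ Real.sqrt (x ⬝ᵥ x) →
      Real.sqrt (bhat x ⬝ᵥ bhat x) + ∑ j, Real.sqrt (σhat j x ⬝ᵥ σhat j x)
        ≤ ε * Real.sqrt (x ⬝ᵥ x)) :
    ∀ ε > (0 : ℝ), ∃ R > (0 : ℝ), ∀ x : Fin n → ℝ, R ≤ Real.sqrt (x ⬝ᵥ x) →
      (x ⬝ᵥ (B *ᵥ x + bhat x)) / (x ⬝ᵥ x)
        + (∑ j, (σ j *ᵥ x + σhat j x) ⬝ᵥ (σ j *ᵥ x + σhat j x)) / (2 * (x ⬝ᵥ x))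
        - (∑ j, (x ⬝ᵥ (σ j *ᵥ x + σhat j x)) ^ 2) / (x ⬝ᵥ x) ^ 2
      ≤ lamMax B + lamMax (∑ j, (σ j)ᵀ * σ j) / 2 - (∑ j, (rhoMin (σ j)) ^ 2) + ε :=
  generator_log_norm_linearizable_bound_general n d B σ bhat σhat hlim
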